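/- arXiv:1103.0895 — 2 statements merged into one kernel-verified Lean document; each statement's English description precedes it below -/
import Mathlib

section
/- For a fixed finite alphabet A and dimension d, the collection of sofic subshifts of A^{ℤ^d} is countable. Consequently there exist finite sets S of multidimensional substitutions and sequences S ∈ S^ℕ whose S-adic subshift is not sofic. -/
/-! Common definitions: multidimensional configurations, subshifts, SFTs,
sofic and effective subshifts, multidimensional substitutions,
S-adic subshifts, non-deterministic substitution systems, property A,
and the marking construction of Aubrun–Sablik. -/

open scoped BigOperators

/-- A `d`-dimensional configuration over the alphabet `A`. -/
abbrev Config (A : Type*) (d : ℕ) := (Fin d → ℤ) → A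

/-- The shift action of `ℤ^d` on configurations. -/
def shift {A : Type*} {d : ℕ} (v : Fin d → ℤ) (x : Config A d) : Config A d :=
  fun u => x (u + v)

/-- A finite pattern, presented as a finite list of (position, letter) pairs. -/
abbrev Pattern (A : Type*) (d : ℕ) := List ((Fin d → ℤ) × A)

/-- The pattern `p` appears in the configuration `x` (at some translate). -/
def PatternAppears {A : Type*} {d : ℕ} (p : Pattern A d) (x : Config A d) : Prop :=
  ∃ v : Fin d → ℤ, ∀ q ∈ p, x (q.1 + v) = q.2

/-- The set of configurations avoiding every pattern of `F`. -/
def avoiding {A : Type*} {d : ℕ} (F : Set (Pattern A d)) : Set (Config A d) :=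
  {x | ∀ p ∈ F, ¬ PatternAppears p x}

/-- A subshift of finite type: defined by a finite family of forbidden patterns. -/
def IsSFT {A : Type*} {d : ℕ} (T : Set (Config A d)) : Prop :=
  ∃ F : Finset (Pattern A d), T = avoiding (↑F : Set (Pattern A d))

/-- The prodiscrete topology on configurations. -/
def configTop (A : Type*) (d : ℕ) : TopologicalSpace (Config A d) :=
  @Pi.topologicalSpace (Fin d → ℤ) (fun _ => A) (fun _ => ⊥)

/-- A factor map: a continuous shift-commuting map between fullshifts. -/
def IsFactorMap {A B : Type*} {d : ℕ} (π : Config A d → Config B d) : Prop :=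
  @Continuous _ _ (configTop A d) (configTop B d) π ∧
    ∀ (v : Fin d → ℤ) (x : Config A d), π (shift v x) = shift v (π x)

/-- A sofic subshift: the image of a subshift of finite type under a factor map. -/
def IsSofic {A : Type*} {d : ℕ} (T : Set (Config A d)) : Prop :=
  ∃ (n : ℕ) (T' : Set (Config (Fin n) d)) (π : Config (Fin n) d → Config A d),
    IsSFT T' ∧ IsFactorMap π ∧ T = π '' T'

/-- An effective subshift: defined by a recursively enumerable set of
forbidden patterns. -/
def IsEffective {A : Type*} [Primcodable A] {d : ℕ} (T : Set (Config A d)) : Prop :=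
  ∃ F : Set (Pattern A d), REPred (· ∈ F) ∧ T = avoiding F

/-- The projective subaction of a `d`-dimensional subshift along the subgroup
of `ℤ^d` generated by the family `u` of vectors. -/
def SA {A : Type*} {d d' : ℕ} (u : Fin d' → Fin d → ℤ) (T : Set (Config A d)) :
    Set (Config A d') :=
  {y | ∃ x ∈ T, ∀ i : Fin d' → ℤ, y i = x (∑ k, i k • u k)}

/-- A rectangular pattern: side lengths `size` and letters `data`
(only the values of `data` on the rectangle `[0,size)` are relevant). -/
structure RectPattern (A : Type*) (d : ℕ) where
  size : Fin d → ℕ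
  data : (Fin d → ℤ) → A

/-- Membership in the (rectangular) support of a rectangular pattern. -/
def RectPattern.mem {A : Type*} {d : ℕ} (p : RectPattern A d) (u : Fin d → ℤ) : Prop :=
  ∀ l, 0 ≤ u l ∧ u l < (p.size l : ℤ)

/-- An `(A,d)`-substitution: it maps every letter to a rectangular pattern. -/
abbrev Substitution (A : Type*) (d : ℕ) := A → RectPattern A d

/-- A substitution is non-degenerate when all images have side lengths `≥ 1`. -/
def Nondegenerate {A : Type*} {d : ℕ} (s : Substitution A d) : Prop :=
  ∀ a l, 1 ≤ (s a).size l

/-- Signed cumulative sums of a width function (`cum g 0 = 0`,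
`cum g (r+1) = cum g r + g r`). -/
def cum (g : ℤ → ℕ) (r : ℤ) : ℤ :=
  if 0 ≤ r then ∑ j ∈ Finset.range r.toNat, (g (j : ℤ) : ℤ)
  else -∑ j ∈ Finset.range (-r).toNat, (g (-(j : ℤ) - 1) : ℤ)

/-- The point of `ℤ^d` with `l`-th coordinate `r` and all other coordinates `0`. -/
def axisPt {d : ℕ} (l : Fin d) (r : ℤ) : Fin d → ℤ :=
  fun l' => if l' = l then r else 0

/-- The deformation `φ` of the grid `ℤ^d` determined by a (position-dependent)
substitution `σ` applied to the letters `f`. -/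
def nphi {A : Type*} {d : ℕ} (σ : (Fin d → ℤ) → Substitution A d)
    (f : (Fin d → ℤ) → A) (i : Fin d → ℤ) : Fin d → ℤ :=
  fun l => cum (fun r => ((σ (axisPt l r)) (f (axisPt l r))).size l) (i l)

/-- Compatibility of a pattern of substitutions with a configuration:
positions sharing an `l`-th coordinate get blocks of equal `l`-th side length. -/
def NCompatC {A : Type*} {d : ℕ} (σ : (Fin d → ℤ) → Substitution A d)
    (x : Config A d) : Prop :=
  ∀ i j : Fin d → ℤ, ∀ l, i l = j l →
    ((σ i) (x i)).size l = ((σ j) (x j)).size l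

/-- `NImageC σ x y`: the configuration `y` is the image of the configuration `x`
under the (position-dependent) pattern of substitutions `σ`. -/
def NImageC {A : Type*} {d : ℕ} (σ : (Fin d → ℤ) → Substitution A d)
    (x y : Config A d) : Prop :=
  NCompatC σ x ∧
    ∀ i j : Fin d → ℤ, (∀ l, 0 ≤ j l ∧ j l < (((σ i) (x i)).size l : ℤ)) →
      y (nphi σ x i + j) = ((σ i) (x i)).data j

/-- Compatibility of a pattern of substitutions with a rectangular pattern. -/
def NCompatP {A : Type*} {d : ℕ} (σ : (Fin d → ℤ) → Substitution A d)
    (p : RectPattern A d) : Prop :=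
  ∀ i j : Fin d → ℤ, p.mem i → p.mem j → ∀ l, i l = j l →
    ((σ i) (p.data i)).size l = ((σ j) (p.data j)).size l

/-- `NImageP σ p q`: the rectangular pattern `q` is the image of the rectangular
pattern `p` under the (position-dependent) pattern of substitutions `σ`. -/
def NImageP {A : Type*} {d : ℕ} (σ : (Fin d → ℤ) → Substitution A d)
    (p q : RectPattern A d) : Prop :=
  NCompatP σ p ∧
    (∀ l, (q.size l : ℤ) = nphi σ p.data (fun l' => (p.size l' : ℤ)) l) ∧
    ∀ i : Fin d → ℤ, p.mem i →
      ∀ j : Fin d → ℤ, (∀ l, 0 ≤ j l ∧ j l < (((σ i) (p.data i)).size l : ℤ)) →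
        q.data (nphi σ p.data i + j) = ((σ i) (p.data i)).data j

/-- The one-letter rectangular pattern. -/
def letterPat {A : Type*} {d : ℕ} (a : A) : RectPattern A d :=
  ⟨fun _ => 1, fun _ => a⟩

/-- `𝒮`-patterns: iterated images of letters under patterns of substitutions
taken from `𝒮`. -/
inductive IsSPattern {A : Type*} {d : ℕ} (𝒮 : Set (Substitution A d)) :
    RectPattern A d → Prop
  | letter (a : A) : IsSPattern 𝒮 (letterPat a)
  | step (p q : RectPattern A d) (σ : (Fin d → ℤ) → Substitution A d)
      (hσ : ∀ u, σ u ∈ 𝒮) (hp : IsSPattern 𝒮 p) (h : NImageP σ p q) :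
      IsSPattern 𝒮 q

/-- The restriction of `f` to the finite window `U` occurs (as a sub-pattern)
inside the rectangular pattern `q`. -/
def OccursIn {A : Type*} {d : ℕ} (U : Finset (Fin d → ℤ)) (f : (Fin d → ℤ) → A)
    (q : RectPattern A d) : Prop :=
  ∃ v : Fin d → ℤ, ∀ u ∈ U, q.mem (u + v) ∧ q.data (u + v) = f u

/-- The local subshift generated by the set of substitutions `𝒮`: every finite
sub-pattern of the configuration is a sub-pattern of an `𝒮`-pattern. -/
def LocalSetSubshift {A : Type*} {d : ℕ} (𝒮 : Set (Substitution A d)) :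
    Set (Config A d) :=
  {x | ∀ U : Finset (Fin d → ℤ), ∃ q, IsSPattern 𝒮 q ∧ OccursIn U x q}

/-- `NChainC 𝒮 n y x`: `x` is obtained from `y` by applying `n` infinite
patterns of substitutions taken from `𝒮`. -/
def NChainC {A : Type*} {d : ℕ} (𝒮 : Set (Substitution A d)) :
    ℕ → Config A d → Config A d → Prop
  | 0, y, x => y = x
  | n+1, y, x => ∃ (z : Config A d) (σ : (Fin d → ℤ) → Substitution A d),
      (∀ u, σ u ∈ 𝒮) ∧ NImageC σ y z ∧ NChainC 𝒮 n z x

/-- The global subshift generated by the set of substitutions `𝒮`: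
configurations with pre-images of every order. -/
def GlobalSetSubshift {A : Type*} {d : ℕ} (𝒮 : Set (Substitution A d)) :
    Set (Config A d) :=
  {x | ∀ n : ℕ, ∃ y, NChainC 𝒮 n y x}

/-- Image of a configuration under a single (deterministic) substitution. -/
def ImageC {A : Type*} {d : ℕ} (s : Substitution A d) (x y : Config A d) : Prop :=
  NImageC (fun _ => s) x y

/-- Image of a rectangular pattern under a single (deterministic) substitution. -/
def ImageP {A : Type*} {d : ℕ} (s : Substitution A d) (p q : RectPattern A d) : Prop :=
  NImageP (fun _ => s) p q

/-- `IterC S n y x` means `ŝ_{[0,n]}(y) = x`, i.e. `x = s_0(s_1(⋯(s_n(y))⋯))`. -/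
def IterC {A : Type*} {d : ℕ} (S : ℕ → Substitution A d) :
    ℕ → Config A d → Config A d → Prop
  | 0, y, x => ImageC (S 0) y x
  | n+1, y, x => ∃ z, ImageC (S (n+1)) y z ∧ IterC S n z x

/-- `IterP S n p q` means `ŝ_{[0,n]}(p) = q` for rectangular patterns. -/
def IterP {A : Type*} {d : ℕ} (S : ℕ → Substitution A d) :
    ℕ → RectPattern A d → RectPattern A d → Prop
  | 0, p, q => ImageP (S 0) p q
  | n+1, p, q => ∃ r, ImageP (S (n+1)) p r ∧ IterP S n r q

/-- The global S-adic subshift `T'_S` of the sequence of substitutions `S`: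
configurations admitting a pre-image under `ŝ_{[0,n]}` for every `n`. -/
def GlobalSAdic {A : Type*} {d : ℕ} (S : ℕ → Substitution A d) : Set (Config A d) :=
  {x | ∀ n : ℕ, ∃ y, IterC S n y x}

/-- The local S-adic subshift `T_S` of the sequence of substitutions `S`:
every finite sub-pattern of the configuration appears in some `ŝ_{[0,n]}(a)`. -/
def LocalSAdic {A : Type*} {d : ℕ} (S : ℕ → Substitution A d) : Set (Config A d) :=
  {x | ∀ U : Finset (Fin d → ℤ), ∃ (n : ℕ) (a : A) (q : RectPattern A d),
    IterP S n (letterPat a) q ∧ OccursIn U x q}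

/-- A sequence of substitutions is effective when the map `i ↦ s_i` is
computable; since the substitutions range over a finite set, this means that
some computable index function into a finite list describes the sequence. -/
def EffectiveSeq {A : Type*} {d : ℕ} (S : ℕ → Substitution A d) : Prop :=
  ∃ (L : List (Substitution A d)) (f : ℕ → ℕ),
    Computable f ∧ ∀ i, L[f i]? = some (S i)

/-- Property A of a set of substitutions `𝒮` (Mozes): any admissible sequence of
substitutions applied to a `2×⋯×2` sub-pattern `l` of an `𝒮`-pattern `p` can be
extended to a sequence of substitutions applied to `p` itself, in such a way
that the blocks deriving from `l` are exactly the prescribed images of `l`. -/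
def HasPropertyA {A : Type*} {d : ℕ} (𝒮 : Set (Substitution A d)) : Prop :=
  ∀ p : RectPattern A d, IsSPattern 𝒮 p →
  ∀ l : RectPattern A d, (∀ m, l.size m = 2) →
  ∀ v : Fin d → ℤ, (∀ u, l.mem u → p.mem (v + u) ∧ p.data (v + u) = l.data u) →
  ∀ (n : ℕ) (σ : ℕ → (Fin d → ℤ) → Substitution A d) (L : ℕ → RectPattern A d),
    L 0 = l →
    (∀ k < n, (∀ u, σ k u ∈ 𝒮) ∧ NImageP (σ k) (L k) (L (k+1))) →
    ∃ (σ' : ℕ → (Fin d → ℤ) → Substitution A d) (P : ℕ → RectPattern A d)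
      (w : ℕ → Fin d → ℤ),
      P 0 = p ∧ w 0 = v ∧
      (∀ k < n, (∀ u, σ' k u ∈ 𝒮) ∧ NImageP (σ' k) (P k) (P (k+1)) ∧
        (∀ u, (L k).mem u → σ' k (w k + u) = σ k u) ∧
        w (k+1) = nphi (σ' k) (P k).data (w k)) ∧
      ∀ k ≤ n, ∀ u, (L k).mem u →
        (P k).mem (w k + u) ∧ (P k).data (w k + u) = (L k).data u

/-- The marked alphabet `A' = A × S²` used to record substitutions. -/
abbrev MarkedAlphabet (A : Type*) := A × Substitution A 2 × Substitution A 2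

/-- The marked substitution `s̃` associated to `s`: it has the same supports,
applies `s` on the `A`-component, records `s` in the vertical marker except on
the right-most column (which keeps the previous vertical marker) and records
`s` in the horizontal marker except on the top row (which keeps the previous
horizontal marker). -/
def marked {A : Type*} (s : Substitution A 2) : Substitution (MarkedAlphabet A) 2 :=
  fun b =>
    { size := (s b.1).size
      data := fun u =>
        ((s b.1).data u,
          if u 0 = ((s b.1).size 0 : ℤ) - 1 then b.2.1 else s,
          if u 1 = ((s b.1).size 1 : ℤ) - 1 then b.2.2 else s) }

/-- Letter-to-letter map keeping the `A`-component. -/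
def piLetter {A : Type*} (x : Config (MarkedAlphabet A) 2) : Config A 2 :=
  fun u => (x u).1

/-- Letter-to-letter map keeping the vertical substitution marker. -/
def piV {A : Type*} (x : Config (MarkedAlphabet A) 2) : Config (Substitution A 2) 2 :=
  fun u => (x u).2.1

/-- Letter-to-letter map keeping the horizontal substitution marker. -/
def piH {A : Type*} (x : Config (MarkedAlphabet A) 2) : Config (Substitution A 2) 2 :=
  fun u => (x u).2.2

/-- The synchronized subshift `T̃_{S̃}`: configurations of the local subshift
generated by the marked substitutions whose horizontal marker is constant
along columns and whose vertical marker is constant along rows. -/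
def Synchronized {A : Type*} (𝒮 : Set (Substitution A 2)) :
    Set (Config (MarkedAlphabet A) 2) :=
  {x | x ∈ LocalSetSubshift (marked '' 𝒮) ∧
    ∀ u : Fin 2 → ℤ,
      piH x u = piH x (u + axisPt 1 1) ∧ piV x u = piV x (u + axisPt 0 1)}

/-!
A factor map from a full shift over a finite alphabet is a sliding block code: by compactness
its value at the origin only depends on a finite window. So a sofic subshift is described by
countable data (alphabet size, finite set of forbidden patterns, window, local rule), and there
are only countably many of them.

On the other hand, the substitutions `τ_c : 2 ↦ c 2 c, 0 ↦ 0, 1 ↦ 1` (`c ∈ {0, 1}`) applied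
along a bit sequence `b` turn the letter `2` into the palindromes `b_n ⋯ b_0 2 b_0 ⋯ b_n`. The
configuration `⋯ b_1 b_0 2 b_0 b_1 ⋯` lies in `T_{τ ∘ b}` but in no `T_{τ ∘ b'}` with `b' ≠ b`,
so the two substitutions `τ_0, τ_1` give continuum many S-adic subshifts, not all of them sofic.
-/

theorem Continuous.exists_finset_dependsOn {ι : Type*} {α : ι → Type*}
    [∀ i, TopologicalSpace (α i)] [∀ i, DiscreteTopology (α i)] [CompactSpace (∀ i, α i)]
    {β : Type*} [TopologicalSpace β] [DiscreteTopology β] {g : (∀ i, α i) → β}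
    (hg : Continuous g) : ∃ W : Finset ι, DependsOn g W := by
  classical
  have hlocal : ∀ x : ∀ i, α i, ∃ W : Finset ι, ∀ y, (∀ i ∈ W, y i = x i) → g y = g x := by
    intro x
    have hx : g ⁻¹' {g x} ∈ nhds x :=
      hg.continuousAt.preimage_mem_nhds ((isOpen_discrete {g x}).mem_nhds rfl)
    rw [nhds_pi, Filter.mem_pi] at hx
    obtain ⟨I, hI, t, ht, hsub⟩ := hx
    refine ⟨hI.toFinset, fun y hy => hsub fun i hi => ?_⟩
    rw [hy i (hI.mem_toFinset.2 hi)]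
    exact mem_of_mem_nhds (ht i)
  choose W hW using hlocal
  have hnhds : ∀ x, {y | ∀ i ∈ W x, y i = x i} ∈ nhds x := fun x =>
    (Filter.eventually_all_finset _).2 fun i _ =>
      (continuous_apply i).continuousAt ((isOpen_discrete {x i}).mem_nhds rfl)
  obtain ⟨t, -, hcover⟩ := isCompact_univ.elim_nhds_subcover _ fun x _ => hnhds x
  refine ⟨t.biUnion W, fun x y hxy => ?_⟩
  obtain ⟨z, hz, hxz⟩ := Set.mem_iUnion₂.1 (hcover (Set.mem_univ x))
  have hyz : ∀ i ∈ W z, y i = z i := fun i hi =>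
    (hxy i (Finset.mem_biUnion.2 ⟨z, hz, hi⟩)).symm.trans (hxz i hi)
  rw [hW z x hxz, hW z y hyz]

section Sofic

variable {α β A : Type*} {d : ℕ}

theorem IsFactorMap.exists_finset_dependsOn [Finite α] {π : Config α d → Config β d}
    (hπ : IsFactorMap π) : ∃ W : Finset (Fin d → ℤ), DependsOn (fun x => π x 0) W := by
  let _ : TopologicalSpace α := ⊥
  let _ : TopologicalSpace β := ⊥
  have _ : DiscreteTopology α := ⟨rfl⟩
  have _ : DiscreteTopology β := ⟨rfl⟩
  exact ((continuous_apply 0).comp hπ.1).exists_finset_dependsOn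

theorem IsFactorMap.apply_eq {π : Config α d → Config β d} (hπ : IsFactorMap π)
    (x : Config α d) (u : Fin d → ℤ) : π x u = π (shift u x) 0 := by
  rw [hπ.2]
  simp [shift]

theorem countable_setOf_isFactorMap [Finite α] [Countable β] :
    {π : Config α d → Config β d | IsFactorMap π}.Countable := by
  classical
  rcases isEmpty_or_nonempty α with hα | ⟨⟨a₀⟩⟩
  · exact Set.Subsingleton.countable fun π _ π' _ => Subsingleton.elim π π'
  have hsub : {π : Config α d → Config β d | IsFactorMap π} ⊆
      ⋃ W : Finset (Fin d → ℤ), {π | IsFactorMap π ∧ DependsOn (fun x => π x 0) W} :=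
    fun π hπ => Set.mem_iUnion.2 <| (hπ.exists_finset_dependsOn).imp fun _ hW => ⟨hπ, hW⟩
  refine (Set.countable_iUnion fun W => ?_).mono hsub
  -- a factor map with window `W` is determined by its local rule on `W`-patterns
  let extend : (W → α) → Config α d := fun w u => if h : u ∈ W then w ⟨u, h⟩ else a₀
  refine (Set.mapsTo_univ (fun π (w : W → α) => π (extend w) 0) _).countable_of_injOn
    ?_ Set.countable_univ
  rintro π ⟨hπ, hπW⟩ π' ⟨hπ', hπ'W⟩ hrule
  funext x u
  have hext : ∀ i ∈ (W : Set (Fin d → ℤ)), shift u x i = extend (W.restrict (shift u x)) i :=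
    fun i hi => by simp [extend, Finset.mem_coe.1 hi]
  calc π x u = π (shift u x) 0 := hπ.apply_eq x u
    _ = π (extend (W.restrict (shift u x))) 0 := hπW hext
    _ = π' (extend (W.restrict (shift u x))) 0 := congrFun hrule _
    _ = π' (shift u x) 0 := (hπ'W hext).symm
    _ = π' x u := (hπ'.apply_eq x u).symm

theorem countable_setOf_isSofic [Countable A] :
    {T : Set (Config A d) | IsSofic T}.Countable := by
  refine (Set.countable_iUnion fun n => Set.countable_iUnion fun F : Finset (Pattern (Fin n) d) =>
    (countable_setOf_isFactorMap (α := Fin n)).image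
      fun π => π '' avoiding (F : Set (Pattern (Fin n) d))).mono ?_
  rintro T ⟨n, T', π, ⟨F, rfl⟩, hπ, rfl⟩
  exact Set.mem_iUnion₂.2 ⟨n, F, π, hπ, rfl⟩

end Sofic

theorem cum_natCast (g : ℤ → ℕ) (n : ℕ) : cum g n = ∑ j ∈ Finset.range n, (g j : ℤ) := by
  simp [cum]

theorem cum_natCast_succ (g : ℤ → ℕ) (n : ℕ) : cum g (n + 1 : ℕ) = cum g n + g n := by
  simp only [cum_natCast, Finset.sum_range_succ]

theorem cum_congr {g g' : ℤ → ℕ} {n : ℕ} (h : ∀ j < n, g j = g' j) : cum g n = cum g' n := by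
  simp only [cum_natCast]
  exact Finset.sum_congr rfl fun j hj => by rw [h j (Finset.mem_range.1 hj)]

theorem natCast_le_cum {g : ℤ → ℕ} (hg : ∀ j, 1 ≤ g j) (n : ℕ) : (n : ℤ) ≤ cum g n := by
  rw [cum_natCast]
  calc (n : ℤ) = ∑ _j ∈ Finset.range n, (1 : ℤ) := by simp
    _ ≤ _ := Finset.sum_le_sum fun j _ => by exact_mod_cast hg j

theorem exists_eq_cum_add {g : ℤ → ℕ} {z : ℤ} (hz : 0 ≤ z) :
    ∀ {n : ℕ}, z < cum g n → ∃ r : ℕ, r < n ∧ ∃ m : ℤ, 0 ≤ m ∧ m < g r ∧ z = cum g r + m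
  | 0, h => by simp [cum] at h; omega
  | n + 1, h => by
    by_cases hn : z < cum g n
    · obtain ⟨r, hr, hm⟩ := exists_eq_cum_add hz hn
      exact ⟨r, by omega, hm⟩
    · rw [cum_natCast_succ] at h
      exact ⟨n, by omega, z - cum g n, by omega, by omega, by ring⟩

namespace RectPattern

variable {A : Type*} {d : ℕ}

-- `NImageP` only determines the image on its support, hence this equivalence.
def Agree (p q : RectPattern A d) : Prop :=
  p.size = q.size ∧ ∀ u, p.mem u → p.data u = q.data u

theorem Agree.refl (p : RectPattern A d) : p.Agree p := ⟨rfl, fun _ _ => rfl⟩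

theorem size_pos_of_mem {p : RectPattern A d} {u : Fin d → ℤ} (hu : p.mem u) (l : Fin d) :
    0 < p.size l := by
  have := hu l
  omega

theorem mem_axisPt {p : RectPattern A d} (hp : ∀ l, 0 < p.size l) {l : Fin d} {r : ℤ}
    (h0 : 0 ≤ r) (hr : r < p.size l) : p.mem (axisPt l r) := by
  intro l'
  by_cases h : l' = l
  · subst h
    simpa [axisPt] using ⟨h0, hr⟩
  · simpa [axisPt, h] using hp l'

end RectPattern

section Image

variable {A : Type*} {d : ℕ} {σ : (Fin d → ℤ) → Substitution A d}

theorem nphi_congr {f f' : (Fin d → ℤ) → A} {i : Fin d → ℤ} (hi : ∀ l, 0 ≤ i l)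
    (h : ∀ l, ∀ r : ℕ, (r : ℤ) < i l → f (axisPt l r) = f' (axisPt l r)) :
    nphi σ f i = nphi σ f' i := by
  funext l
  obtain ⟨n, hn⟩ : ∃ n : ℕ, i l = n := ⟨(i l).toNat, by have := hi l; omega⟩
  simp only [nphi, hn]
  exact cum_congr fun r hr => by rw [h l r (by omega)]

theorem nphi_congr_of_agree {p p' : RectPattern A d} (hp : ∀ l, 0 < p.size l)
    (hpp' : p.Agree p') {i : Fin d → ℤ} (hi : ∀ l, 0 ≤ i l ∧ i l ≤ p.size l) :
    nphi σ p.data i = nphi σ p'.data i :=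
  nphi_congr (fun l => (hi l).1) fun l r hr =>
    hpp'.2 _ (p.mem_axisPt hp (by omega) (by have := (hi l).2; omega))

theorem NImageP.of_agree {p p' q : RectPattern A d} (hp : ∀ l, 0 < p.size l)
    (hpp' : p.Agree p') (h : NImageP σ p q) : NImageP σ p' q := by
  have hmem : ∀ u, p'.mem u → p.mem u := fun u hu => by
    simpa only [RectPattern.mem, hpp'.1] using hu
  have hphi : ∀ i, p.mem i → nphi σ p'.data i = nphi σ p.data i := fun i hi =>
    (nphi_congr_of_agree hp hpp' fun l => ⟨(hi l).1, (hi l).2.le⟩).symm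
  refine ⟨fun i j hi hj l hl => ?_, fun l => ?_, fun i hi j hj => ?_⟩
  · rw [← hpp'.2 i (hmem i hi), ← hpp'.2 j (hmem j hj)]
    exact h.1 i j (hmem i hi) (hmem j hj) l hl
  · rw [h.2.1 l, ← hpp'.1, nphi_congr_of_agree hp hpp' fun _ => ⟨by positivity, le_rfl⟩]
  · rw [← hpp'.2 i (hmem i hi)] at hj ⊢
    rw [hphi i (hmem i hi)]
    exact h.2.2 i (hmem i hi) j hj

theorem NImageP.agree {p q q' : RectPattern A d} (h : NImageP σ p q) (h' : NImageP σ p q') :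
    q.Agree q' := by
  have hsize : q.size = q'.size :=
    funext fun l => by exact_mod_cast (h.2.1 l).trans (h'.2.1 l).symm
  refine ⟨hsize, fun z hz => ?_⟩
  have hcover : ∀ l, ∃ r : ℕ, r < p.size l ∧ ∃ m : ℤ, 0 ≤ m ∧
      m < (σ (axisPt l r) (p.data (axisPt l r))).size l ∧
        z l = nphi σ p.data (fun _ => r) l + m :=
    fun l => exists_eq_cum_add (hz l).1 ((hz l).2.trans_eq (h.2.1 l))
  choose r hr m hm0 hm hzl using hcover
  let i : Fin d → ℤ := fun l => r l
  have hi : p.mem i := fun l => ⟨Int.natCast_nonneg _, Nat.cast_lt.2 (hr l)⟩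
  have hblock : ∀ l, 0 ≤ m l ∧ m l < (σ i (p.data i)).size l := fun l => by
    have hl := p.mem_axisPt (p.size_pos_of_mem hi) (Int.natCast_nonneg (r l))
      (by exact_mod_cast hr l)
    rw [← h.1 _ i hl hi l (by simp [axisPt, i])]
    exact ⟨hm0 l, hm l⟩
  have hz_eq : z = nphi σ p.data i + m := funext hzl
  rw [hz_eq, h.2.2 i hi m hblock, h'.2.2 i hi m hblock]

theorem NImageP.size_pos (hσ : ∀ u, Nondegenerate (σ u)) {p q : RectPattern A d}
    (hp : ∀ l, 0 < p.size l) (h : NImageP σ p q) (l : Fin d) : 0 < q.size l := by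
  have hq := h.2.1 l
  have hle := natCast_le_cum (fun r => hσ (axisPt l r) (p.data (axisPt l r)) l) (p.size l)
  have := hp l
  simp only [nphi] at hq
  omega

theorem imageP_letterPat {s : Substitution A d} {a : A} (ha : s a = letterPat a) :
    ImageP s (letterPat a) (letterPat a) := by
  refine ⟨fun _ _ _ _ _ _ => rfl, fun l => ?_, fun _ _ _ _ => by simp [ha, letterPat]⟩
  simp [nphi, letterPat, ha, cum]

end Image

section Iterate

variable {A : Type*} {d : ℕ} {S : ℕ → Substitution A d}

theorem IterP.agree (hS : ∀ i, Nondegenerate (S i)) :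
    ∀ {n : ℕ} {p p' q q' : RectPattern A d}, (∀ l, 0 < p.size l) → p.Agree p' →
      IterP S n p q → IterP S n p' q' → q.Agree q'
  | 0, _, _, _, _, hp, hpp', h, h' => (NImageP.of_agree hp hpp' h).agree h'
  | _ + 1, _, _, _, _, hp, hpp', ⟨_, hr, hrq⟩, ⟨_, hr', hrq'⟩ =>
    IterP.agree hS (hr.size_pos (fun _ => hS _) hp) ((hr.of_agree hp hpp').agree hr') hrq hrq'

theorem iterP_succ_of_imageP {p r q : RectPattern A d} :
    ∀ {n : ℕ}, IterP (fun i => S (i + 1)) n p r → ImageP (S 0) r q → IterP S (n + 1) p q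
  | 0, hpr, hrq => ⟨r, hpr, hrq⟩
  | _ + 1, ⟨r', hpr', hr'r⟩, hrq => ⟨r', hpr', iterP_succ_of_imageP hr'r hrq⟩

theorem iterP_letterPat {a : A} (ha : ∀ i, S i a = letterPat a) :
    ∀ n, IterP S n (letterPat a) (letterPat a)
  | 0 => imageP_letterPat (ha 0)
  | n + 1 => ⟨letterPat a, imageP_letterPat (ha (n + 1)), iterP_letterPat ha n⟩

end Iterate

section Palindrome

-- `ray b` is the word `2 b_0 b_1 ⋯` and `palindrome b k` is `b_{k-1} ⋯ b_0 2 b_0 ⋯ b_{k-1}`,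
-- the bits being written as the letters `0, 1`.
def ray (b : ℕ → Bool) : ℕ → Fin 3
  | 0 => 2
  | n + 1 => cond (b n) 1 0

def palindrome (b : ℕ → Bool) (k : ℕ) : RectPattern (Fin 3) 1 :=
  ⟨fun _ => 2 * k + 1, fun u => ray b (u 0 - k).natAbs⟩

def rayConfig (b : ℕ → Bool) : Config (Fin 3) 1 := fun u => ray b (u 0).natAbs

def tau (c : Bool) : Substitution (Fin 3) 1 := fun a =>
  if a = 2 then palindrome (fun _ => c) 1 else letterPat a

theorem ray_eq_two_iff {b : ℕ → Bool} {n : ℕ} : ray b n = 2 ↔ n = 0 := by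
  cases n with
  | zero => simp [ray]
  | succ n => cases hb : b n <;> simp [ray, hb]

theorem ray_tail (b : ℕ → Bool) {n : ℕ} (hn : n ≠ 0) :
    ray (fun m => b (m + 1)) n = ray b (n + 1) := by
  obtain ⟨n, rfl⟩ := Nat.exists_eq_succ_of_ne_zero hn
  rfl

theorem eq_of_ray_succ_eq {b b' : ℕ → Bool} {n : ℕ} (h : ray b (n + 1) = ray b' (n + 1)) :
    b n = b' n := by
  cases hb : b n <;> cases hb' : b' n <;> simp [ray, hb, hb'] at h ⊢

theorem tau_size (c : Bool) (a : Fin 3) (l : Fin 1) :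
    (tau c a).size l = if a = 2 then 3 else 1 := by
  by_cases h : a = 2 <;> simp [tau, palindrome, letterPat, h]

theorem nondegenerate_tau (c : Bool) : Nondegenerate (tau c) := fun a l => by
  rw [tau_size]; split_ifs <;> omega

theorem nCompatP_of_fin_one {A : Type*} (σ : (Fin 1 → ℤ) → Substitution A 1)
    (p : RectPattern A 1) : NCompatP σ p := by
  intro i j _ _ l hl
  obtain rfl : i = j := funext fun l' => by rwa [Subsingleton.elim l' l]
  rfl

theorem cum_ite (k t : ℕ) :
    cum (fun r => if r = k then 3 else 1) t = t + if k < t then 2 else 0 := by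
  induction t with
  | zero => simp [cum]
  | succ t ih =>
    rw [cum_natCast_succ, ih]
    split_ifs <;> push_cast <;> omega

theorem nphi_tau_palindrome (c : Bool) (f : ℕ → Bool) (k : ℕ) {i : Fin 1 → ℤ} (hi : 0 ≤ i 0) :
    nphi (fun _ => tau c) (palindrome f k).data i 0 = i 0 + if (k : ℤ) < i 0 then 2 else 0 := by
  obtain ⟨t, ht⟩ : ∃ t : ℕ, i 0 = t := ⟨(i 0).toNat, by omega⟩
  have hg : (fun r => (tau c ((palindrome f k).data (axisPt 0 r))).size 0) =
      fun r : ℤ => if r = k then 3 else 1 := by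
    funext r
    simp [tau_size, palindrome, axisPt, ray_eq_two_iff, sub_eq_zero]
  simp only [nphi, hg, ht, cum_ite]
  simp

theorem ray_eq_ray_const (b : ℕ → Bool) {n : ℕ} (hn : n ≤ 1) : ray b n = ray (fun _ => b 0) n := by
  interval_cases n <;> rfl

theorem tau_image_palindrome (b : ℕ → Bool) (k : ℕ) :
    ImageP (tau (b 0)) (palindrome (fun n => b (n + 1)) k) (palindrome b (k + 1)) := by
  refine ⟨nCompatP_of_fin_one _ _, fun l => ?_, fun i hi j hj => ?_⟩
  · obtain rfl := Subsingleton.elim l 0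
    rw [nphi_tau_palindrome _ _ _ (by positivity)]
    simp only [palindrome]
    split_ifs <;> omega
  · obtain ⟨hi0, hik⟩ := hi 0
    obtain ⟨hj0, hjk⟩ := hj 0
    change i 0 < ((2 * k + 1 : ℕ) : ℤ) at hik
    change j 0 < ((tau (b 0) (ray _ (i 0 - k).natAbs)).size 0 : ℤ) at hjk
    change ray b ((nphi _ _ i 0 + j 0) - ((k + 1 : ℕ) : ℤ)).natAbs =
      (tau (b 0) (ray _ (i 0 - k).natAbs)).data j
    rw [nphi_tau_palindrome _ _ _ hi0]
    simp only [tau_size, ray_eq_two_iff] at hjk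
    by_cases ht : i 0 = k
    · rw [if_pos (by omega)] at hjk
      have hcenter : (i 0 - k).natAbs = 0 := by omega
      have hoffset : (i 0 + (if (k : ℤ) < i 0 then 2 else 0) + j 0 - ((k + 1 : ℕ) : ℤ)).natAbs =
          (j 0 - ((1 : ℕ) : ℤ)).natAbs := by
        rw [if_neg (by omega)]; omega
      rw [hcenter, hoffset, ray_eq_ray_const b (by omega)]
      rfl
    · have hcenter : (i 0 - k).natAbs ≠ 0 := by omega
      rw [if_neg hcenter] at hjk
      have hoffset : (i 0 + (if (k : ℤ) < i 0 then 2 else 0) + j 0 - ((k + 1 : ℕ) : ℤ)).natAbs =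
          (i 0 - k).natAbs + 1 := by
        split_ifs <;> omega
      rw [hoffset, ← ray_tail b hcenter]
      simp [tau, ray_eq_two_iff, hcenter, letterPat]

theorem palindrome_zero_agree (f : ℕ → Bool) : (palindrome f 0).Agree (letterPat 2) := by
  refine ⟨rfl, fun u hu => ?_⟩
  have hu0 : u 0 = 0 := by have := hu 0; simp only [palindrome] at this; omega
  simp [palindrome, letterPat, hu0, ray]

theorem iterP_palindrome (b : ℕ → Bool) :
    ∀ n, IterP (tau ∘ b) n (letterPat 2) (palindrome b (n + 1))
  | 0 => (tau_image_palindrome b 0).of_agree (fun _ => Nat.succ_pos _) (palindrome_zero_agree _)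
  | n + 1 => iterP_succ_of_imageP (iterP_palindrome (fun m => b (m + 1)) n)
      (tau_image_palindrome b (n + 1))

theorem IterP.agree_palindrome {b : ℕ → Bool} {n : ℕ} {q : RectPattern (Fin 3) 1}
    (h : IterP (tau ∘ b) n (letterPat 2) q) : q.Agree (palindrome b (n + 1)) :=
  h.agree (fun i => nondegenerate_tau (b i)) (fun _ => Nat.one_pos) (.refl _) (iterP_palindrome b n)

theorem IterP.agree_letterPat {b : ℕ → Bool} {n : ℕ} {a : Fin 3} (ha : a ≠ 2)
    {q : RectPattern (Fin 3) 1} (h : IterP (tau ∘ b) n (letterPat a) q) : q.Agree (letterPat a) :=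
  h.agree (fun i => nondegenerate_tau (b i)) (fun _ => Nat.one_pos) (.refl _)
    (iterP_letterPat (fun i => by simp [tau, ha]) n)

theorem rayConfig_mem_localSAdic (b : ℕ → Bool) : rayConfig b ∈ LocalSAdic (tau ∘ b) := by
  intro U
  set N := U.sup fun u => (u 0).natAbs
  refine ⟨N, 2, palindrome b (N + 1), iterP_palindrome b N, fun _ => (N + 1 : ℕ), fun u hu => ?_⟩
  have huN : (u 0).natAbs ≤ N := Finset.le_sup (f := fun u => (u 0).natAbs) hu
  refine ⟨fun l => ?_, ?_⟩
  · obtain rfl := Subsingleton.elim l 0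
    simp only [palindrome, Pi.add_apply]
    omega
  · simp [palindrome, rayConfig]

theorem rayConfig_not_mem_localSAdic {b b' : ℕ → Bool} {j : ℕ} (hj : b j ≠ b' j) :
    rayConfig b ∉ LocalSAdic (tau ∘ b') := by
  intro hmem
  let w : Fin 1 → ℤ := fun _ => (j + 1 : ℕ)
  obtain ⟨n, a, q, hq, v, hocc⟩ := hmem {0, w}
  obtain ⟨hv, hqv⟩ := hocc 0 (by simp)
  rw [zero_add] at hv hqv
  by_cases ha : a = 2
  · subst ha
    have hagree := hq.agree_palindrome
    -- the unique letter `2` pins down the offset `v`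
    have hv0 : v 0 = (n + 1 : ℕ) := by
      have h2 : ray b' (v 0 - (n + 1 : ℕ)).natAbs = 2 := (hagree.2 v hv).symm.trans hqv
      rw [ray_eq_two_iff] at h2
      omega
    obtain ⟨hw, hqw⟩ := hocc w (by simp)
    have hray : ray b' (j + 1) = ray b (j + 1) := by
      have hpos : ((w + v) 0 - (n + 1 : ℕ)).natAbs = j + 1 := by
        simp only [Pi.add_apply, w, hv0]
        omega
      calc ray b' (j + 1) = (palindrome b' (n + 1)).data (w + v) := by
            simp only [palindrome, hpos]
        _ = q.data (w + v) := (hagree.2 _ hw).symm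
        _ = ray b (j + 1) := hqw
    exact hj (eq_of_ray_succ_eq hray).symm
  · exact ha (((hq.agree_letterPat ha).2 v hv).symm.trans hqv)

end Palindrome

theorem exists_not_isSofic_localSAdic_tau : ∃ b : ℕ → Bool, ¬ IsSofic (LocalSAdic (tau ∘ b)) := by
  by_contra! hsofic
  have hinj : Function.Injective fun b : ℕ → Bool => LocalSAdic (tau ∘ b) :=
    fun b b' (hbb' : LocalSAdic (tau ∘ b) = LocalSAdic (tau ∘ b')) => by
    by_contra hne
    obtain ⟨j, hj⟩ := Function.ne_iff.1 hne
    exact rayConfig_not_mem_localSAdic hj (hbb' ▸ rayConfig_mem_localSAdic b)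
  have : Uncountable (ℕ → Bool) := by
    rw [← Cardinal.aleph0_lt_mk_iff]
    simpa using Cardinal.aleph0_lt_continuum
  exact Set.not_countable_univ ((countable_setOf_isSofic.preimage hinj).mono fun b _ => hsofic b)

/-- for a fixed finite alphabet and dimension, there are only
countably many sofic subshifts; consequently there exist finite sets of
multidimensional substitutions and sequences over them whose S-adic subshift
is not sofic. -/
theorem sofic_countable_and_exists_nonsofic_sadic
    (A : Type) [Fintype A] (d : ℕ) :
    Set.Countable {T : Set (Config A d) | IsSofic T} ∧
    ∃ (k d' : ℕ), 1 ≤ d' ∧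
      ∃ (𝒮 : Finset (Substitution (Fin k) d')) (S : ℕ → Substitution (Fin k) d'),
        (∀ i, S i ∈ 𝒮) ∧ ¬ IsSofic (LocalSAdic S) := by
  classical
  obtain ⟨b, hb⟩ := exists_not_isSofic_localSAdic_tau
  refine ⟨countable_setOf_isSofic, 3, 1, le_rfl, {tau false, tau true}, tau ∘ b, fun i => ?_, hb⟩
  cases hbi : b i <;> simp [hbi]
end

section
/- Let S be a finite set of (A,d)-substitutions and, for each s ∈ S, let s̃ be the marked substitution on the alphabet A' = A × S² which applies s to the A-component and records s in the vertical marker of all columns except the last one of each substituted block (keeping the previous vertical marker in the last column) and records s in the horizontal marker of all rows except the top one of each substituted block (keeping the previous horizontal marker in the top row). Let π : A' → A be the letter-to-letter map keeping the A-component. Then for every sequence S ∈ S^ℕ with associated marked sequence S̃ ∈ S̃^ℕ, the local S-adic subshift T_S equals the image π(T_{S̃}) of the local S̃-adic subshift under the induced factor map. -/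
/-! Common definitions: multidimensional configurations, subshifts, SFTs,
sofic and effective subshifts, multidimensional substitutions,
S-adic subshifts, non-deterministic substitution systems, property A,
and the marking construction of Aubrun–Sablik. -/

open scoped BigOperators

/-!
Projecting a marked pattern onto its `A`-component turns every `s̃`-image into an `s`-image,
which gives `π(T_{S̃}) ⊆ T_S`. Conversely, every letter-to-letter factor `f` with
`s(f b) = f(τ b)` lets `τ`-images be lifted: blocks of an image never overlap, so the lift is
defined block by block, and off the blocks by any section of `f`. Lifting the patterns
`ŝ_{[0,n]}(a)` in which the windows of `x ∈ T_S` occur, with all markers in the finite set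
`𝒮`, gives marked configurations over `x` that are right on larger and larger windows; a
cluster point of these (compactness of a product of finite sets) lies in `T_{S̃}` over `x`.
-/

lemma cum_add_one (g : ℤ → ℕ) {r : ℤ} (hr : 0 ≤ r) : cum g (r + 1) = cum g r + g r := by
  rw [cum, cum, if_pos (by omega), if_pos hr, show (r + 1).toNat = r.toNat + 1 by omega,
    Finset.sum_range_succ, Int.toNat_of_nonneg hr]

lemma cum_mono (g : ℤ → ℕ) {a b : ℤ} (ha : 0 ≤ a) (hab : a ≤ b) : cum g a ≤ cum g b := by
  rw [cum, cum, if_pos ha, if_pos (ha.trans hab)]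
  exact Finset.sum_le_sum_of_subset_of_nonneg (Finset.range_subset_range.2 (by omega))
    fun _ _ _ => Int.natCast_nonneg _

lemma eq_of_cum_add_eq (g : ℤ → ℕ) {r r' j j' : ℤ} (hr : 0 ≤ r) (hr' : 0 ≤ r')
    (hj : 0 ≤ j ∧ j < g r) (hj' : 0 ≤ j' ∧ j' < g r') (h : cum g r + j = cum g r' + j') :
    r = r' := by
  have before : ∀ {a b : ℤ}, 0 ≤ a → a < b → cum g a + g a ≤ cum g b := fun ha hab => by
    rw [← cum_add_one g ha]
    exact cum_mono g (by omega) (by omega)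
  rcases lt_trichotomy r r' with hlt | rfl | hgt
  · have := before hr hlt
    omega
  · rfl
  · have := before hr' hgt
    omega

section Blocks

variable {A : Type*} {d : ℕ}

lemma RectPattern.mem_axisPt_s10 {p : RectPattern A d} {i : Fin d → ℤ} (hi : p.mem i) (l : Fin d) :
    p.mem (axisPt l (i l)) := by
  intro l'
  by_cases h : l' = l
  · subst h
    simpa [axisPt] using hi l'
  · simp only [axisPt, if_neg h]
    have := hi l'
    omega

lemma NCompatP.size_eq_axisPt {σ : (Fin d → ℤ) → Substitution A d} {p : RectPattern A d}
    (hc : NCompatP σ p) {i : Fin d → ℤ} (hi : p.mem i) (l : Fin d) :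
    ((σ i) (p.data i)).size l = ((σ (axisPt l (i l))) (p.data (axisPt l (i l)))).size l :=
  hc _ _ hi (RectPattern.mem_axisPt_s10 hi l) l (by simp [axisPt])

lemma NCompatP.nphi_add_inj {σ : (Fin d → ℤ) → Substitution A d} {p : RectPattern A d}
    (hc : NCompatP σ p) {i i' j j' : Fin d → ℤ} (hi : p.mem i) (hi' : p.mem i')
    (hj : ∀ l, 0 ≤ j l ∧ j l < ((σ i) (p.data i)).size l)
    (hj' : ∀ l, 0 ≤ j' l ∧ j' l < ((σ i') (p.data i')).size l)
    (h : nphi σ p.data i + j = nphi σ p.data i' + j') : i = i' ∧ j = j' := by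
  obtain rfl : i = i' := funext fun l => by
    have hl := congrFun h l
    have hjl := hj l
    have hjl' := hj' l
    rw [hc.size_eq_axisPt hi] at hjl
    rw [hc.size_eq_axisPt hi'] at hjl'
    exact eq_of_cum_add_eq _ (hi l).1 (hi' l).1 hjl hjl' hl
  exact ⟨rfl, add_left_cancel h⟩

end Blocks

attribute [ext] RectPattern

section Factor

variable {A B : Type*} {d : ℕ}

def RectPattern.map (f : B → A) (p : RectPattern B d) : RectPattern A d :=
  ⟨p.size, f ∘ p.data⟩

lemma RectPattern.size_eq_of_map_eq {f : B → A} {p : RectPattern B d} {p' : RectPattern A d}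
    (h : p.map f = p') : p.size = p'.size :=
  h ▸ rfl

lemma RectPattern.data_of_map_eq {f : B → A} {p : RectPattern B d} {p' : RectPattern A d}
    (h : p.map f = p') (u : Fin d → ℤ) : f (p.data u) = p'.data u :=
  h ▸ rfl

lemma OccursIn.map {U : Finset (Fin d → ℤ)} {x : Config B d} {q : RectPattern B d}
    (h : OccursIn U x q) (f : B → A) : OccursIn U (f ∘ x) (q.map f) :=
  let ⟨v, hv⟩ := h
  ⟨v, fun u hu => ⟨(hv u hu).1, congrArg f (hv u hu).2⟩⟩

lemma OccursIn.mono {U V : Finset (Fin d → ℤ)} {x : Config A d} {q : RectPattern A d}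
    (h : OccursIn V x q) (hUV : U ⊆ V) : OccursIn U x q :=
  let ⟨v, hv⟩ := h
  ⟨v, fun u hu => hv u (hUV hu)⟩

lemma OccursIn.congr {U : Finset (Fin d → ℤ)} {x y : Config A d} {q : RectPattern A d}
    (h : OccursIn U x q) (hxy : ∀ u ∈ U, x u = y u) : OccursIn U y q :=
  let ⟨v, hv⟩ := h
  ⟨v, fun u hu => ⟨(hv u hu).1, (hv u hu).2.trans (hxy u hu)⟩⟩

variable {f : B → A} {τ : Substitution B d} {s : Substitution A d}

lemma nphi_eq_of_map_eq (hτ : ∀ b, (τ b).map f = s (f b)) (p : RectPattern B d) :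
    nphi (fun _ => τ) p.data = nphi (fun _ => s) (p.map f).data := by
  funext i l
  simp only [nphi, RectPattern.map, Function.comp_apply,
    fun b => RectPattern.size_eq_of_map_eq (hτ b)]

lemma NCompatP.of_map_eq (hτ : ∀ b, (τ b).map f = s (f b)) {p : RectPattern B d}
    (h : NCompatP (fun _ => s) (p.map f)) : NCompatP (fun _ => τ) p := by
  intro i j hi hj l hl
  simp only [RectPattern.size_eq_of_map_eq (hτ _)]
  exact h i j hi hj l hl

lemma ImageP.map (hτ : ∀ b, (τ b).map f = s (f b)) {p q : RectPattern B d}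
    (h : ImageP τ p q) : ImageP s (p.map f) (q.map f) := by
  obtain ⟨hc, hsize, hdata⟩ := h
  refine ⟨fun i j hi hj l hl => ?_, fun l => ?_, fun i hi j hj => ?_⟩
  · simpa only [RectPattern.map, Function.comp_apply, RectPattern.size_eq_of_map_eq (hτ _)]
      using hc i j hi hj l hl
  · rw [← nphi_eq_of_map_eq hτ]
    exact hsize l
  · simp only [RectPattern.map, Function.comp_apply, ← RectPattern.size_eq_of_map_eq (hτ _)]
      at hj ⊢
    rw [← RectPattern.data_of_map_eq (hτ _), ← hdata i hi j hj, nphi_eq_of_map_eq hτ]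
    rfl

lemma ImageP.exists_lift (hτ : ∀ b, (τ b).map f = s (f b)) {P : Set B}
    (hτP : ∀ b ∈ P, ∀ j, (τ b).data j ∈ P) (g : A → B) (hfg : ∀ a, f (g a) = a)
    (hgP : ∀ a, g a ∈ P) {p : RectPattern B d} (hp : ∀ u, p.data u ∈ P) {q₀ : RectPattern A d}
    (h : ImageP s (p.map f) q₀) :
    ∃ q, ImageP τ p q ∧ q.map f = q₀ ∧ ∀ u, q.data u ∈ P := by
  classical
  obtain ⟨hc, hsize, hdata⟩ := h
  have hcτ : NCompatP (fun _ => τ) p := hc.of_map_eq hτ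
  set φ := nphi (fun _ => τ) p.data
  have hφ : φ = nphi (fun _ => s) (p.map f).data := nphi_eq_of_map_eq hτ p
  let InBlock (c : (Fin d → ℤ) × (Fin d → ℤ)) : Prop :=
    p.mem c.1 ∧ ∀ l, 0 ≤ c.2 l ∧ c.2 l < (τ (p.data c.1)).size l
  let q : RectPattern B d :=
    ⟨q₀.size, fun u => if hu : ∃ c, InBlock c ∧ φ c.1 + c.2 = u
      then (τ (p.data hu.choose.1)).data hu.choose.2 else g (q₀.data u)⟩
  have hq : ∀ i j, InBlock (i, j) → q.data (φ i + j) = (τ (p.data i)).data j := by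
    intro i j hij
    have hu : ∃ c, InBlock c ∧ φ c.1 + c.2 = φ i + j := ⟨(i, j), hij, rfl⟩
    obtain ⟨⟨hc₁, hc₂⟩, hceq⟩ := hu.choose_spec
    obtain ⟨h₁, h₂⟩ := hcτ.nphi_add_inj hc₁ hij.1 hc₂ hij.2 hceq
    simp only [q, dif_pos hu, h₁, h₂]
  refine ⟨q, ⟨hcτ, fun l => ?_, fun i hi j hj => hq i j ⟨hi, hj⟩⟩, ?_, fun u => ?_⟩
  · rw [nphi_eq_of_map_eq hτ]
    exact hsize l
  · refine RectPattern.ext rfl (funext fun u => ?_)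
    simp only [q, RectPattern.map, Function.comp_apply]
    split_ifs with hu
    · obtain ⟨⟨hc₁, hc₂⟩, hceq⟩ := hu.choose_spec
      generalize hu.choose = c at hc₁ hc₂ hceq ⊢
      rw [RectPattern.data_of_map_eq (hτ _), ← hceq, hφ]
      refine (hdata _ hc₁ _ fun l => ?_).symm
      simpa only [RectPattern.map, Function.comp_apply,
        ← RectPattern.size_eq_of_map_eq (hτ _)] using hc₂ l
    · exact hfg _
  · simp only [q]
    split_ifs
    · exact hτP _ (hp _) _
    · exact hgP _

variable {T : ℕ → Substitution B d} {S : ℕ → Substitution A d}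

lemma IterP.map (hT : ∀ k b, (T k b).map f = S k (f b)) {n : ℕ} {p q : RectPattern B d}
    (h : IterP T n p q) : IterP S n (p.map f) (q.map f) := by
  induction n generalizing p with
  | zero => exact ImageP.map (hT 0) h
  | succ n ih =>
    obtain ⟨r, hpr, hrq⟩ := h
    exact ⟨r.map f, hpr.map (hT (n + 1)), ih hrq⟩

lemma IterP.exists_lift (hT : ∀ k b, (T k b).map f = S k (f b)) {P : Set B}
    (hTP : ∀ k, ∀ b ∈ P, ∀ j, (T k b).data j ∈ P) (g : A → B) (hfg : ∀ a, f (g a) = a)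
    (hgP : ∀ a, g a ∈ P) {n : ℕ} {p : RectPattern B d} (hp : ∀ u, p.data u ∈ P)
    {q₀ : RectPattern A d} (h : IterP S n (p.map f) q₀) :
    ∃ q, IterP T n p q ∧ q.map f = q₀ ∧ ∀ u, q.data u ∈ P := by
  induction n generalizing p with
  | zero => exact ImageP.exists_lift (hT 0) (hTP 0) g hfg hgP hp h
  | succ n ih =>
    obtain ⟨r₀, hpr₀, hr₀q₀⟩ := h
    obtain ⟨r, hpr, rfl, hr⟩ := ImageP.exists_lift (hT (n + 1)) (hTP (n + 1)) g hfg hgP hp hpr₀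
    obtain ⟨q, hrq, hq, hqP⟩ := ih hr hr₀q₀
    exact ⟨q, ⟨r, hpr, hrq⟩, hq, hqP⟩

end Factor

lemma exists_frequently_eq_of_mem_finset {κ ι β : Type*} (l : Filter κ) [l.NeBot]
    (Y : κ → ι → β) (T : ι → Finset β) (hY : ∀ k i, Y k i ∈ T i) :
    ∃ y : ι → β, ∀ U : Finset ι, ∃ᶠ k in l, ∀ i ∈ U, Y k i = y i := by
  let F := Ultrafilter.of l
  have hlim : ∀ i, ∃ b, {k | Y k i = b} ∈ F := fun i => by
    have hcover : (⋃ b ∈ (T i : Set β), {k | Y k i = b}) ∈ F :=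
      Filter.univ_mem' fun k => Set.mem_biUnion (hY k i) rfl
    obtain ⟨b, -, hb⟩ := (Ultrafilter.finite_biUnion_mem_iff (T i).finite_toSet).1 hcover
    exact ⟨b, hb⟩
  choose y hy using hlim
  refine ⟨y, fun U => ?_⟩
  have hU : ∀ᶠ k in (F : Filter κ), ∀ i ∈ U, Y k i = y i :=
    (Filter.eventually_all_finset U).2 fun i _ => hy i
  exact hU.frequently.filter_mono (Ultrafilter.of_le l)

section Marked

variable {A : Type*}

lemma marked_map_fst (s : Substitution A 2) (b : MarkedAlphabet A) :
    (marked s b).map Prod.fst = s b.1 :=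
  rfl

lemma marked_data_mem {𝒮 : Set (Substitution A 2)} {s : Substitution A 2} (hs : s ∈ 𝒮)
    {b : MarkedAlphabet A} (hb : b ∈ Set.univ ×ˢ 𝒮 ×ˢ 𝒮) (j : Fin 2 → ℤ) :
    (marked s b).data j ∈ Set.univ ×ˢ 𝒮 ×ˢ 𝒮 := by
  simp only [Set.mem_prod, Set.mem_univ, true_and] at hb ⊢
  simp only [marked]
  split_ifs <;> simp_all

lemma exists_marked_lift_occursIn {𝒮 : Set (Substitution A 2)} {S : ℕ → Substitution A 2}
    (hS : ∀ i, S i ∈ 𝒮) {x : Config A 2} (hx : x ∈ LocalSAdic S) (U : Finset (Fin 2 → ℤ)) :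
    ∃ y : Config (MarkedAlphabet A) 2, piLetter y = x ∧ (∀ u, y u ∈ Set.univ ×ˢ 𝒮 ×ˢ 𝒮) ∧
      ∃ (n : ℕ) (b : MarkedAlphabet A) (q : RectPattern (MarkedAlphabet A) 2),
        IterP (fun i => marked (S i)) n (letterPat b) q ∧ OccursIn U y q := by
  obtain ⟨n, a, q₀, hq₀, v, hv⟩ := hx U
  have hg : ∀ a : A, (a, S 0, S 0) ∈ Set.univ ×ˢ 𝒮 ×ˢ 𝒮 := fun _ => by simp [hS 0]
  obtain ⟨q, hq, rfl, hqP⟩ := IterP.exists_lift (fun k => marked_map_fst (S k))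
    (fun k _ => marked_data_mem (hS k)) (fun a => (a, S 0, S 0)) (fun _ => rfl) hg
    (p := letterPat (a, S 0, S 0)) (fun _ => hg a) hq₀
  refine ⟨fun u => if u ∈ U then q.data (u + v) else (x u, S 0, S 0), funext fun u => ?_,
    fun u => ?_, n, _, q, hq, v, fun u hu => ⟨(hv u hu).1, (if_pos hu).symm⟩⟩
  · by_cases hu : u ∈ U
    · simpa [piLetter, hu, RectPattern.map] using (hv u hu).2
    · simp [piLetter, hu]
  · by_cases hu : u ∈ U
    · simpa [hu] using hqP (u + v)
    · simpa [hu] using hg (x u)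

end Marked

theorem marked_sadic_projects_onto_sadic_general
    {A : Type}
    (𝒮 : Finset (Substitution A 2)) (S : ℕ → Substitution A 2)
    (hS : ∀ i, S i ∈ 𝒮) :
    LocalSAdic S = piLetter '' LocalSAdic (fun i => marked (S i)) := by
  refine Set.Subset.antisymm (fun x hx => ?_) ?_
  · choose Y hYx hY𝒮 hYocc using exists_marked_lift_occursIn (𝒮 := ↑𝒮) hS hx
    obtain ⟨y, hy⟩ := exists_frequently_eq_of_mem_finset Filter.atTop Y
      (fun u => {x u} ×ˢ 𝒮 ×ˢ 𝒮) fun V u => by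
        simpa [← congrFun (hYx V) u, piLetter] using hY𝒮 V u
    refine ⟨y, fun U => ?_, funext fun u => ?_⟩
    · obtain ⟨V, hVy, hUV⟩ := ((hy U).and_eventually (Filter.eventually_ge_atTop U)).exists
      obtain ⟨n, b, q, hq, hocc⟩ := hYocc V
      exact ⟨n, b, q, hq, (hocc.mono hUV).congr hVy⟩
    · obtain ⟨V, hV⟩ := (hy {u}).exists
      rw [piLetter, ← hV u (Finset.mem_singleton_self u)]
      exact congrFun (hYx V) u
  · rintro _ ⟨y, hy, rfl⟩ U
    obtain ⟨n, b, q, hq, hocc⟩ := hy U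
    exact ⟨n, b.1, q.map Prod.fst, hq.map fun k => marked_map_fst (S k), hocc.map Prod.fst⟩

/-- the local S-adic subshift `T_S` is the image, under the
letter-to-letter map keeping the `A`-component, of the local S̃-adic subshift
of the associated marked sequence `S̃`. -/
theorem marked_sadic_projects_onto_sadic
    {A : Type} [Fintype A]
    (𝒮 : Finset (Substitution A 2)) (S : ℕ → Substitution A 2)
    (hS : ∀ i, S i ∈ 𝒮) :
    LocalSAdic S = piLetter '' LocalSAdic (fun i => marked (S i)) :=
  marked_sadic_projects_onto_sadic_general 𝒮 S hS
end
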